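/- arXiv:1808.06031 — 7 statements merged into one kernel-verified Lean document; each statement's English description precedes it below -/
import Mathlib

section
/- Let G be a finite abelian group and let S = a_1, ..., a_m be a sequence of non-identity elements of G. Let P be the set of all products of subsequences of S (including the empty product, which equals 1). If the stabilizer Stab_G(P) = {x ∈ G : xP = P} is trivial, then |P| ≥ m + 1. -/
/-!
Adding the elements one at a time, the subset products of `a₁, …, a_j` are those of
`a₁, …, a_{j-1}` together with their `a_j`-translates. If the set did not grow at step `j`,
its translate, having the same size, would be the set itself, so `a_j` would stabilise it,
and then also every larger set of subset products, in particular `P`. With trivial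
stabiliser the set therefore grows at each of the `m` steps, starting from `{1}`.
-/

open Finset
open scoped Pointwise

namespace Finset

variable {ι G : Type*} [CommGroup G] [DecidableEq G]

def subsetProducts (a : ι → G) (s : Finset ι) : Finset G :=
  s.powerset.image fun T => ∏ i ∈ T, a i

variable (a : ι → G)

@[simp]
theorem mem_subsetProducts {s : Finset ι} {g : G} :
    g ∈ subsetProducts a s ↔ ∃ T ⊆ s, ∏ i ∈ T, a i = g := by
  simp [subsetProducts]

@[simp]
theorem subsetProducts_empty : subsetProducts a ∅ = {1} := by
  simp [subsetProducts]

variable [DecidableEq ι]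

theorem subsetProducts_insert {j : ι} {s : Finset ι} (hj : j ∉ s) :
    subsetProducts a (insert j s) = subsetProducts a s ∪ a j • subsetProducts a s := by
  rw [subsetProducts, powerset_insert, image_union, image_image, subsetProducts,
    ← image_smul, image_image]
  congr 1
  refine image_congr fun T hT => ?_
  have hjT : j ∉ T := fun h => hj (mem_powerset.mp hT h)
  simp [prod_insert hjT]

theorem smul_subsetProducts_insert {x : G} {s : Finset ι}
    (hx : x • subsetProducts a s = subsetProducts a s) (j : ι) :
    x • subsetProducts a (insert j s) = subsetProducts a (insert j s) := by
  by_cases hj : j ∈ s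
  · rwa [insert_eq_of_mem hj]
  · rw [subsetProducts_insert a hj, smul_finset_union, smul_comm x (a j), hx]

theorem smul_subsetProducts_of_subset {x : G} {s t : Finset ι}
    (hx : x • subsetProducts a s = subsetProducts a s) (hst : s ⊆ t) :
    x • subsetProducts a t = subsetProducts a t := by
  suffices ∀ u : Finset ι, x • subsetProducts a (s ∪ u) = subsetProducts a (s ∪ u) by
    simpa [union_eq_right.mpr hst] using this t
  intro u
  induction u using Finset.induction_on with
  | empty => simpa using hx
  | insert j u _ ih => rw [union_insert]; exact smul_subsetProducts_insert a ih j

theorem card_subsetProducts_lt_insert {j : ι} {s : Finset ι} (hj : j ∉ s)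
    (hs : a j • subsetProducts a s ≠ subsetProducts a s) :
    #(subsetProducts a s) < #(subsetProducts a (insert j s)) := by
  rw [subsetProducts_insert a hj]
  refine card_lt_card (ssubset_of_subset_of_ne subset_union_left fun h => hs ?_)
  exact eq_of_subset_of_card_le (union_eq_left.mp h.symm) (card_smul_finset _ _).ge

theorem card_add_one_le_card_subsetProducts {t : Finset ι}
    (ht : ∀ i ∈ t, a i • subsetProducts a t ≠ subsetProducts a t) {s : Finset ι}
    (hst : s ⊆ t) :
    #s + 1 ≤ #(subsetProducts a s) := by
  induction s using Finset.induction_on with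
  | empty => simp
  | insert j s hj ih =>
    have hjt := hst (mem_insert_self j s)
    have hlt := card_subsetProducts_lt_insert a hj fun h =>
      ht j hjt (smul_subsetProducts_of_subset a h ((subset_insert j s).trans hst))
    rw [card_insert_of_notMem hj]
    linarith [ih ((subset_insert j s).trans hst)]

end Finset

theorem stmt1_general {G : Type*} [CommGroup G] (m : ℕ) (a : Fin m → G)
    (ha : ∀ i, a i ≠ 1) (P : Set G)
    (hP : P = {g : G | ∃ T : Finset (Fin m), ∏ i ∈ T, a i = g})
    (hstab : {x : G | (x * ·) '' P = P} = {1}) :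
    m + 1 ≤ P.ncard := by
  classical
  have hPeq : P = subsetProducts a univ := by ext; simp [hP]
  have hnotstab : ∀ i ∈ univ, a i • subsetProducts a univ ≠ subsetProducts a univ := by
    intro i _ h
    have : a i ∈ {x : G | (x * ·) '' P = P} := by
      change (a i • ·) '' P = P
      rw [Set.image_smul, hPeq, ← coe_smul_finset, h]
    rw [hstab] at this
    exact ha i this
  simpa [hPeq] using card_add_one_le_card_subsetProducts a hnotstab (subset_refl univ)

theorem stmt1 {G : Type*} [CommGroup G] [Finite G] (m : ℕ) (a : Fin m → G)
    (ha : ∀ i, a i ≠ 1) (P : Set G)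
    (hP : P = {g : G | ∃ T : Finset (Fin m), ∏ i ∈ T, a i = g})
    (hstab : {x : G | (x * ·) '' P = P} = {1}) :
    m + 1 ≤ P.ncard :=
  stmt1_general m a ha P hP hstab
end

section
/- For any positive integers a, b ≥ 2, the Davenport constant of the group C_a × C_b equals (gcd(a,b) - 1) + (lcm(a,b) - 1) + 1, where C_n denotes the cyclic group of order n. -/
/-!
Write `g = gcd a b` and `l = lcm a b`. In `ZMod a × ZMod b`, `i • (1, 0) + j • (1, 1) = 0` means
`a ∣ i + j` and `b ∣ j`, hence `g ∣ i` and then `l ∣ j`. So `g - 1` copies of `(1, 0)` followed by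
`l - 1` copies of `(1, 1)` have no nonempty zero-sum subsequence.

For the upper bound we lift to pairs of integers and induct on `a`. If `g = 1`, the group has
`ab = l` elements and two prefix sums coincide. Otherwise let `p` be a prime dividing `g`. By
Olson's argument (in `𝔽_p[(ℤ/p)^r]` every product of more than `r (p - 1)` elements of the
augmentation ideal vanishes, so the subsets with zero sum have signed count `0` in `𝔽_p`), every
`2p - 1` elements of `(ℤ/p)²` contain a nonempty zero-sum subset and every `3p - 2` elements contain
one with at most `p` elements. Greedily, `g + l - 1` terms therefore contain `g/p + l/p - 1`
disjoint blocks whose sums lie in `pℤ × pℤ`, and the induction hypothesis for `(a/p, b/p)`,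
applied to the block sums divided by `p`, finishes the proof.
-/

/-- The Davenport constant of an additive commutative group: the least `k > 0` such that
every sequence of `k` elements has a nonempty subsequence summing to `0`. -/
noncomputable def DavenportAdd (G : Type*) [AddCommGroup G] : ℕ :=
  sInf {k : ℕ | 0 < k ∧ ∀ f : Fin k → G,
    ∃ T : Finset (Fin k), T.Nonempty ∧ ∑ i ∈ T, f i = 0}

open Finset

theorem prod_eq_zero_of_forall_mem_span_of_pow_eq_zero {R κ ι : Type*} [CommRing R] {p : ℕ}
    {u : κ → R} {K : Finset κ} (hu : ∀ k ∈ K, u k ^ p = 0)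
    {F : ι → R} (hF : ∀ i, F i ∈ Ideal.span (u '' K)) {s : Finset ι}
    (hs : #K * (p - 1) < #s) : ∏ i ∈ s, F i = 0 := by
  classical
  induction K using Finset.induction_on generalizing ι with
  | empty =>
    obtain ⟨i, hi⟩ := card_pos.mp (by omega : 0 < #s)
    exact prod_eq_zero hi (by simpa using hF i)
  | insert k K hk ih =>
    simp only [coe_insert, Set.image_insert_eq, Ideal.mem_span_insert] at hF
    choose A G hG hAG using hF
    rw [card_insert_of_notMem hk, add_mul, one_mul] at hs
    rw [prod_congr rfl fun i _ => hAG i, prod_add]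
    refine sum_eq_zero fun U hU => ?_
    rw [mem_powerset] at hU
    by_cases hUp : p ≤ #U
    · rw [prod_mul_distrib, prod_const, pow_eq_zero_of_le hUp (hu k (mem_insert_self k K)),
        mul_zero, zero_mul]
    · rw [ih (fun k' hk' => hu k' (mem_insert_of_mem hk')) hG (s := s \ U), mul_zero]
      rw [card_sdiff_of_subset hU]
      omega

namespace AddMonoidAlgebra

instance charP {R G : Type*} [Semiring R] [AddMonoid G] (p : ℕ) [CharP R p] :
    CharP (AddMonoidAlgebra R G) p :=
  charP_of_injective_ringHom (f := singleZeroRingHom) single_right_injective p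

variable {R G ι : Type*} [CommRing R] [AddCommMonoid G]

theorem one_sub_single_pow_char {p : ℕ} [Fact p.Prime] [CharP R p] {e : G} (he : p • e = 0) :
    (1 - single e (1 : R)) ^ p = 0 := by
  rw [sub_pow_char, one_pow, single_pow, he, one_pow, ← one_def, sub_self]

theorem one_sub_single_mem_span {S : Set G} {g : G} (hg : g ∈ AddSubmonoid.closure S) :
    1 - single g (1 : R) ∈ Ideal.span ((fun e => 1 - single e 1) '' S) := by
  induction hg using AddSubmonoid.closure_induction with
  | mem e he => exact Ideal.subset_span ⟨e, he, rfl⟩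
  | zero => rw [← one_def, sub_self]; exact Ideal.zero_mem _
  | add g h _ _ hg hh =>
    have hsplit :
        1 - single (g + h) (1 : R) = (1 - single g 1) + single g 1 * (1 - single h 1) := by
      rw [mul_sub, mul_one, single_mul_single, one_mul]; ring
    rw [hsplit]
    exact add_mem hg (Ideal.mul_mem_left _ _ hh)

theorem prod_one_sub_single (c : ι → G) (s : Finset ι) :
    ∏ i ∈ s, (1 - single (c i) (1 : R)) = ∑ T ∈ s.powerset, single (∑ i ∈ T, c i) ((-1) ^ #T) := by
  classical
  have h : ∀ i, 1 - single (c i) (1 : R) = single (c i) (-1) + 1 := fun i => by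
    rw [single_neg]; ring
  simp only [h]
  rw [prod_add]
  simp only [prod_const_one, mul_one, prod_single, prod_const]

end AddMonoidAlgebra

section ZeroSums

variable {G ι : Type*} [AddCommGroup G]

def zeroSumSubsets [DecidableEq G] (c : ι → G) (s : Finset ι) : Finset (Finset ι) :=
  {T ∈ s.powerset | ∑ i ∈ T, c i = 0}

open AddMonoidAlgebra in
theorem sum_neg_one_pow_card_zeroSumSubsets_eq_zero_of_closure [DecidableEq G] {p : ℕ}
    [Fact p.Prime] {S : Finset G} (hS : AddSubmonoid.closure (S : Set G) = ⊤)
    (hSp : ∀ e ∈ S, p • e = 0) (c : ι → G) {s : Finset ι} (hs : #S * (p - 1) < #s) :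
    ∑ T ∈ zeroSumSubsets c s, (-1 : ZMod p) ^ #T = 0 := by
  have hprod : ∏ i ∈ s, (1 - single (c i) (1 : ZMod p)) = 0 :=
    prod_eq_zero_of_forall_mem_span_of_pow_eq_zero (fun e he => one_sub_single_pow_char (hSp e he))
      (fun i => one_sub_single_mem_span (hS ▸ AddSubmonoid.mem_top (c i))) hs
  rw [prod_one_sub_single] at hprod
  simpa [coeff_sum, coeff_single, Finsupp.single_apply, zeroSumSubsets, sum_filter] using
    congrArg (fun x => x.coeff 0) hprod

theorem sum_neg_one_pow_card_zeroSumSubsets_eq_zero [DecidableEq G] {p : ℕ} [Fact p.Prime]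
    [Module (ZMod p) G] [Module.Finite (ZMod p) G] (c : ι → G) {s : Finset ι}
    (hs : Module.finrank (ZMod p) G * (p - 1) < #s) :
    ∑ T ∈ zeroSumSubsets c s, (-1 : ZMod p) ^ #T = 0 := by
  have b := Module.finBasis (ZMod p) G
  refine sum_neg_one_pow_card_zeroSumSubsets_eq_zero_of_closure (S := univ.image b)
    (eq_top_iff.mpr fun g _ => ?_) ?_ c
    (lt_of_le_of_lt (Nat.mul_le_mul_right _ (card_image_le.trans (by simp))) hs)
  · rw [← b.sum_repr g]
    refine sum_mem fun i _ => ?_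
    rw [← ZMod.natCast_zmod_val (b.repr g i), Nat.cast_smul_eq_nsmul]
    exact nsmul_mem (AddSubmonoid.subset_closure (by simp)) _
  · intro e _
    rw [← Nat.cast_smul_eq_nsmul (ZMod p), ZMod.natCast_self, zero_smul]

theorem exists_zeroSum_of_finrank_mul_lt {p : ℕ} [Fact p.Prime] [Module (ZMod p) G]
    [Module.Finite (ZMod p) G] (c : ι → G) {s : Finset ι}
    (hs : Module.finrank (ZMod p) G * (p - 1) < #s) :
    ∃ T ⊆ s, T.Nonempty ∧ ∑ i ∈ T, c i = 0 := by
  classical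
  by_contra! h
  have hzero : zeroSumSubsets c s = {∅} := by
    ext T
    simp only [zeroSumSubsets, mem_filter, mem_powerset, mem_singleton]
    refine ⟨fun ⟨hT, hsum⟩ => not_nonempty_iff_eq_empty.mp fun hne => h T hT hne hsum, ?_⟩
    rintro rfl
    simp
  simpa [hzero] using sum_neg_one_pow_card_zeroSumSubsets_eq_zero (p := p) c hs

theorem exists_zeroSum_of_card_le [Fintype G] (c : ι → G) {s : Finset ι}
    (hs : Fintype.card G ≤ #s) : ∃ T ⊆ s, T.Nonempty ∧ ∑ i ∈ T, c i = 0 := by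
  classical
  set e : Fin #s ↪ ι := s.equivFin.symm.toEmbedding.trans (Function.Embedding.subtype _)
  set P : Fin (#s + 1) → Finset (Fin #s) := fun j => {i | (i : ℕ) < j}
  have hP : ∀ {j₁ j₂}, j₁ ≤ j₂ → P j₁ ⊆ P j₂ := fun h i hi => by
    simp only [P, mem_filter, mem_univ, true_and] at hi ⊢
    exact lt_of_lt_of_le hi h
  suffices ∀ j₁ j₂, j₁ < j₂ → ∑ i ∈ P j₁, c (e i) = ∑ i ∈ P j₂, c (e i) →
      ∃ T ⊆ s, T.Nonempty ∧ ∑ i ∈ T, c i = 0 by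
    obtain ⟨j₁, j₂, hne, heq⟩ := Fintype.exists_ne_map_eq_of_card_lt
      (fun j => ∑ i ∈ P j, c (e i)) (by rw [Fintype.card_fin]; omega)
    rcases hne.lt_or_gt with h | h
    · exact this j₁ j₂ h heq
    · exact this j₂ j₁ h heq.symm
  intro j₁ j₂ hlt heq
  refine ⟨(P j₂ \ P j₁).map e, ?_, ?_, ?_⟩
  · intro x hx
    obtain ⟨i, -, rfl⟩ := mem_map.mp hx
    exact (s.equivFin.symm i).2
  · refine (map_nonempty.mpr ⟨⟨j₁, lt_of_lt_of_le hlt (Nat.lt_succ_iff.mp j₂.2)⟩, ?_⟩)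
    simp [P, hlt]
  · rw [sum_map, sum_sdiff_eq_sub (hP hlt.le), heq, sub_self]

theorem exists_zeroSum_card_le_two [Fintype G] (hG : ∀ x : G, x + x = 0) (c : ι → G)
    {s : Finset ι} (hs : Fintype.card G ≤ #s) :
    ∃ T ⊆ s, T.Nonempty ∧ #T ≤ 2 ∧ ∑ i ∈ T, c i = 0 := by
  classical
  by_cases hz : ∃ i ∈ s, c i = 0
  · obtain ⟨i, hi, hci⟩ := hz
    exact ⟨{i}, by simpa, singleton_nonempty i, by simp, by simpa⟩
  push Not at hz
  have hcard : #(univ.erase (0 : G)) < #s := by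
    rw [card_erase_of_mem (mem_univ _), card_univ]
    have := Fintype.card_pos (α := G)
    omega
  obtain ⟨i, hi, j, hj, hij, hcij⟩ := exists_ne_map_eq_of_card_lt_of_maps_to hcard
    (f := c) fun i hi => mem_erase.mpr ⟨hz i hi, mem_univ _⟩
  refine ⟨{i, j}, by simp [insert_subset_iff, hi, hj], insert_nonempty i {j}, card_le_two, ?_⟩
  rw [sum_pair hij, hcij, hG]

end ZeroSums

namespace ZMod

variable {ι : Type*} {p : ℕ} [Fact p.Prime]

theorem exists_zeroSum_card_dvd (c : ι → ZMod p × ZMod p) {s : Finset ι} (hs : 3 * p - 2 ≤ #s) :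
    ∃ T ⊆ s, T.Nonempty ∧ ∑ i ∈ T, c i = 0 ∧ p ∣ #T := by
  have hp := (Fact.out : p.Prime).one_lt
  obtain ⟨T, hTs, hT, hsum⟩ := exists_zeroSum_of_finrank_mul_lt (p := p)
    (fun i => (c i, (1 : ZMod p))) (s := s)
    (by simp only [Module.finrank_prod, Module.finrank_self]; omega)
  refine ⟨T, hTs, hT, ?_⟩
  simpa [Prod.ext_iff, Prod.fst_sum, Prod.snd_sum, ZMod.natCast_eq_zero_iff] using hsum

theorem exists_zeroSum_card_le_of_card_eq_two_mul (hp2 : p ≠ 2) (c : ι → ZMod p × ZMod p)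
    {U : Finset ι} (hU : #U = 2 * p) (hUsum : ∑ i ∈ U, c i = 0) :
    ∃ T ⊆ U, T.Nonempty ∧ #T ≤ p ∧ ∑ i ∈ T, c i = 0 := by
  classical
  have hp := (Fact.out : p.Prime)
  have := hp.two_le
  by_contra! hshort
  -- a zero-sum `V ⊆ U` other than `∅, U` would give one of size `≤ p`: `V` or `U \ V`
  have hzero : zeroSumSubsets c U = {∅, U} := by
    ext V
    simp only [zeroSumSubsets, mem_filter, mem_powerset, mem_insert, mem_singleton]
    refine ⟨fun ⟨hVU, hV⟩ => ?_, by rintro (rfl | rfl) <;> simp [hUsum]⟩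
    by_contra! hne
    by_cases hVp : #V ≤ p
    · exact hshort V hVU hne.1 hVp hV
    · refine hshort (U \ V) sdiff_subset ?_ ?_ ?_
      · exact sdiff_nonempty.mpr fun h => hne.2 (subset_antisymm hVU h)
      · rw [card_sdiff_of_subset hVU]; omega
      · rw [sum_sdiff_eq_sub hVU, hV, hUsum, sub_zero]
  have hcount := sum_neg_one_pow_card_zeroSumSubsets_eq_zero (p := p) c (s := U)
    (by simp only [Module.finrank_prod, Module.finrank_self]; omega)
  have hUne : U ≠ ∅ := fun h => by simp [h] at hU; omega
  rw [hzero, sum_pair hUne.symm, card_empty, hU, pow_zero, pow_mul, neg_one_sq, one_pow,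
    one_add_one_eq_two] at hcount
  exact hp2 ((Nat.prime_dvd_prime_iff_eq hp Nat.prime_two).mp
    ((ZMod.natCast_eq_zero_iff _ _).mp (by exact_mod_cast hcount)))

theorem exists_zeroSum_card_le (c : ι → ZMod p × ZMod p) {s : Finset ι} (hs : 3 * p - 2 ≤ #s) :
    ∃ T ⊆ s, T.Nonempty ∧ #T ≤ p ∧ ∑ i ∈ T, c i = 0 := by
  have hp := (Fact.out : p.Prime).two_le
  obtain rfl | hp2 := eq_or_ne p 2
  · exact exists_zeroSum_card_le_two
      (fun x => Prod.ext (CharTwo.add_self_eq_zero x.1) (CharTwo.add_self_eq_zero x.2)) c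
      (by simpa using hs)
  obtain ⟨s₀, hs₀, hs₀card⟩ := exists_subset_card_eq hs
  obtain ⟨U, hUs, hU, hUsum, k, hk⟩ := exists_zeroSum_card_dvd c hs₀card.ge
  have hk3 : k < 3 := Nat.lt_of_mul_lt_mul_left (a := p) (by have := card_le_card hUs; omega)
  interval_cases k
  · simp [hU.ne_empty] at hk
  · exact ⟨U, hUs.trans hs₀, hU, by omega, hUsum⟩
  · obtain ⟨T, hTU, hT⟩ := exists_zeroSum_card_le_of_card_eq_two_mul hp2 c (by omega) hUsum
    exact ⟨T, hTU.trans (hUs.trans hs₀), hT⟩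

theorem exists_pairwiseDisjoint_zeroSums [DecidableEq ι] (c : ι → ZMod p × ZMod p) (k : ℕ)
    {s : Finset ι} (hs : k * p + p - 1 ≤ #s) :
    ∃ 𝒜 : Finset (Finset ι), #𝒜 = k ∧ (𝒜 : Set (Finset ι)).PairwiseDisjoint id ∧
      ∀ T ∈ 𝒜, T ⊆ s ∧ T.Nonempty ∧ ∑ i ∈ T, c i = 0 := by
  have hp := (Fact.out : p.Prime).two_le
  induction k generalizing s with
  | zero => exact ⟨∅, by simp⟩
  | succ k ih =>
    obtain rfl | hk := eq_or_ne k 0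
    · obtain ⟨T, hTs, hT, hsum⟩ := exists_zeroSum_of_finrank_mul_lt (p := p) c (s := s)
        (by simp only [Module.finrank_prod, Module.finrank_self]; omega)
      exact ⟨{T}, card_singleton T, by simp, by simpa [hTs, hT]⟩
    rw [add_mul, one_mul] at hs
    obtain ⟨T, hTs, hT, hTp, hsum⟩ := exists_zeroSum_card_le c (s := s) (by
      have := Nat.mul_le_mul_right p (Nat.one_le_iff_ne_zero.mpr hk)
      omega)
    obtain ⟨𝒜, h𝒜card, h𝒜disj, h𝒜⟩ := ih (s := s \ T) (by
      rw [card_sdiff_of_subset hTs]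
      omega)
    have hT𝒜 : ∀ U ∈ 𝒜, Disjoint T U := fun U hU =>
      disjoint_of_subset_right (h𝒜 U hU).1 disjoint_sdiff
    have hnot : T ∉ 𝒜 := fun h => hT.ne_empty (disjoint_self.mp (hT𝒜 T h))
    refine ⟨insert T 𝒜, by rw [card_insert_of_notMem hnot, h𝒜card], ?_, ?_⟩
    · rw [coe_insert]
      exact h𝒜disj.insert fun U hU _ => hT𝒜 U hU
    · simp only [mem_insert, forall_eq_or_imp]
      exact ⟨⟨hTs, hT, hsum⟩, fun U hU => ⟨(h𝒜 U hU).1.trans sdiff_subset, (h𝒜 U hU).2⟩⟩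

end ZMod

theorem sum_intCast_prod_eq_zero_iff {ι : Type*} {m n : ℕ} (u v : ι → ℤ) (T : Finset ι) :
    ∑ i ∈ T, ((u i : ZMod m), (v i : ZMod n)) = 0 ↔
      (m : ℤ) ∣ ∑ i ∈ T, u i ∧ (n : ℤ) ∣ ∑ i ∈ T, v i := by
  simp [Prod.ext_iff, Prod.fst_sum, Prod.snd_sum, ← Int.cast_sum,
    ZMod.intCast_zmod_eq_zero_iff_dvd]

theorem exists_dvd_sum_of_mul_le {ι : Type*} {a b : ℕ} (ha : 0 < a) (hb : 0 < b)
    (u v : ι → ℤ) {s : Finset ι} (hs : a * b ≤ #s) :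
    ∃ T ⊆ s, T.Nonempty ∧ (a : ℤ) ∣ ∑ i ∈ T, u i ∧ (b : ℤ) ∣ ∑ i ∈ T, v i := by
  have : NeZero a := ⟨ha.ne'⟩
  have : NeZero b := ⟨hb.ne'⟩
  simp_rw [← sum_intCast_prod_eq_zero_iff]
  exact exists_zeroSum_of_card_le _ (by rwa [Fintype.card_prod, ZMod.card, ZMod.card])

theorem exists_dvd_sum_of_gcd_add_lcm_le {ι : Type*} {a b : ℕ} (ha : 0 < a) (hb : 0 < b)
    (u v : ι → ℤ) {s : Finset ι} (hs : Nat.gcd a b + Nat.lcm a b - 1 ≤ #s) :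
    ∃ T ⊆ s, T.Nonempty ∧ (a : ℤ) ∣ ∑ i ∈ T, u i ∧ (b : ℤ) ∣ ∑ i ∈ T, v i := by
  classical
  induction a using Nat.strong_induction_on generalizing ι b with
  | _ a ih =>
  obtain hg | hg := eq_or_ne (Nat.gcd a b) 1
  · refine exists_dvd_sum_of_mul_le ha hb u v ?_
    rw [← Nat.Coprime.lcm_eq_mul hg]
    omega
  obtain ⟨p, hp, hpg⟩ := Nat.exists_prime_and_dvd hg
  have := Fact.mk hp
  obtain ⟨a', rfl⟩ := hpg.trans (Nat.gcd_dvd_left a b)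
  obtain ⟨b', rfl⟩ := hpg.trans (Nat.gcd_dvd_right _ b)
  have ha' : 0 < a' := Nat.pos_of_mul_pos_left ha
  have hb' : 0 < b' := Nat.pos_of_mul_pos_left hb
  rw [Nat.gcd_mul_left, Nat.lcm_mul_left, ← mul_add] at hs
  obtain ⟨𝒜, h𝒜card, h𝒜disj, h𝒜⟩ := ZMod.exists_pairwiseDisjoint_zeroSums
    (fun i => ((u i : ZMod p), (v i : ZMod p))) (Nat.gcd a' b' + Nat.lcm a' b' - 1) (s := s) (by
      have := Nat.gcd_pos_of_pos_left b' ha'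
      rwa [← add_one_mul, Nat.sub_add_cancel (by omega), mul_comm])
  simp only [sum_intCast_prod_eq_zero_iff] at h𝒜
  obtain ⟨ℬ, hℬ𝒜, hℬ, hℬa, hℬb⟩ := ih a' (lt_mul_left ha' hp.one_lt) ha' hb'
    (fun T => (∑ i ∈ T, u i) / p) (fun T => (∑ i ∈ T, v i) / p) h𝒜card.ge
  have hsum : ∀ w : ι → ℤ, (∀ T ∈ ℬ, (p : ℤ) ∣ ∑ i ∈ T, w i) →
      ∑ i ∈ ℬ.biUnion id, w i = p * ∑ T ∈ ℬ, (∑ i ∈ T, w i) / p := fun w hw => by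
    rw [sum_biUnion (h𝒜disj.subset hℬ𝒜), mul_sum]
    exact sum_congr rfl fun T hT => (Int.mul_ediv_cancel' (hw T hT)).symm
  refine ⟨ℬ.biUnion id, biUnion_subset.mpr fun T hT => (h𝒜 T (hℬ𝒜 hT)).1,
    hℬ.biUnion fun T hT => (h𝒜 T (hℬ𝒜 hT)).2.1, ?_, ?_⟩
  · rw [hsum u fun T hT => (h𝒜 T (hℬ𝒜 hT)).2.2.1, Nat.cast_mul]
    exact mul_dvd_mul_left _ hℬa
  · rw [hsum v fun T hT => (h𝒜 T (hℬ𝒜 hT)).2.2.2, Nat.cast_mul]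
    exact mul_dvd_mul_left _ hℬb

section Davenport

variable {G : Type*} [AddCommGroup G]

theorem davenportAdd_eq_succ {n : ℕ}
    (hup : ∀ f : Fin (n + 1) → G, ∃ T : Finset (Fin (n + 1)), T.Nonempty ∧ ∑ i ∈ T, f i = 0)
    (hlow : ∃ f : Fin n → G, ∀ T : Finset (Fin n), T.Nonempty → ∑ i ∈ T, f i ≠ 0) :
    DavenportAdd G = n + 1 := by
  refine IsLeast.csInf_eq ⟨⟨n.succ_pos, hup⟩, fun k ⟨_, hk⟩ => ?_⟩
  by_contra! hkn
  obtain ⟨f, hf⟩ := hlow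
  have hle : k ≤ n := Nat.lt_succ_iff.mp hkn
  obtain ⟨T, hT, hsum⟩ := hk (f ∘ Fin.castLE hle)
  exact hf (T.map (Fin.castLEEmb hle)) hT.map (by rwa [sum_map])

theorem exists_zeroSumFree_of_nsmul_add_nsmul {x y : G} {m n : ℕ}
    (hxy : ∀ i ≤ m, ∀ j ≤ n, i • x + j • y = 0 → i = 0 ∧ j = 0) :
    ∃ f : Fin (m + n) → G, ∀ T : Finset (Fin (m + n)), T.Nonempty → ∑ i ∈ T, f i ≠ 0 := by
  refine ⟨fun i => if (i : ℕ) < m then x else y, fun T hT hsum => ?_⟩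
  rw [sum_ite, sum_const, sum_const] at hsum
  have hcard : ∀ q : Fin (m + n) → Prop, [DecidablePred q] → #(T.filter q) ≤ #(univ.filter q) :=
    fun q _ => card_le_card (filter_subset_filter _ (subset_univ T))
  have hm : #(T.filter fun i : Fin (m + n) => (i : ℕ) < m) ≤ m :=
    (hcard _).trans (by rw [Fin.card_filter_val_lt]; exact min_le_right _ _)
  have hn : #(T.filter fun i : Fin (m + n) => ¬ (i : ℕ) < m) ≤ n := by
    refine (hcard _).trans ?_
    have := card_filter_add_card_filter_not (s := univ) fun i : Fin (m + n) => (i : ℕ) < m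
    rw [Fin.card_filter_val_lt, card_univ, Fintype.card_fin] at this
    omega
  obtain ⟨h1, h2⟩ := hxy _ hm _ hn hsum
  have := card_filter_add_card_filter_not (s := T) fun i : Fin (m + n) => (i : ℕ) < m
  rw [h1, h2] at this
  exact hT.ne_empty (card_eq_zero.mp this.symm)

end Davenport

theorem ZMod.eq_zero_of_nsmul_add_nsmul_eq_zero {a b i j : ℕ} (hi : i < Nat.gcd a b)
    (hj : j < Nat.lcm a b) (h : i • ((1 : ZMod a), (0 : ZMod b)) + j • (1, 1) = 0) :
    i = 0 ∧ j = 0 := by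
  have ha : a ∣ i + j := by
    simpa [Prod.ext_iff, ← ZMod.natCast_eq_zero_iff, add_comm] using congrArg Prod.fst h
  have hb : b ∣ j := by
    simpa [← ZMod.natCast_eq_zero_iff] using congrArg Prod.snd h
  have hi0 : i = 0 := Nat.eq_zero_of_dvd_of_lt
    ((Nat.dvd_add_left ((Nat.gcd_dvd_right a b).trans hb)).mp ((Nat.gcd_dvd_left a b).trans ha)) hi
  subst hi0
  exact ⟨rfl, Nat.eq_zero_of_dvd_of_lt (Nat.lcm_dvd (by simpa using ha) hb) hj⟩

theorem stmt2 (a b : ℕ) (ha : 2 ≤ a) (hb : 2 ≤ b) :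
    DavenportAdd (ZMod a × ZMod b) = (Nat.gcd a b - 1) + (Nat.lcm a b - 1) + 1 := by
  have ha' : 0 < a := by omega
  have hb' : 0 < b := by omega
  have hg := Nat.gcd_pos_of_pos_left b ha'
  have hl := Nat.lcm_pos ha' hb'
  refine davenportAdd_eq_succ (fun f => ?_) (exists_zeroSumFree_of_nsmul_add_nsmul
    fun i hi j hj => ZMod.eq_zero_of_nsmul_add_nsmul_eq_zero (a := a) (b := b) (by omega)
      (by omega))
  obtain ⟨T, -, hT, hsum⟩ := exists_dvd_sum_of_gcd_add_lcm_le ha' hb'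
    (fun i => ((f i).1.cast : ℤ)) (fun i => ((f i).2.cast : ℤ)) (s := univ)
    (by rw [card_univ, Fintype.card_fin]; omega)
  refine ⟨T, hT, ?_⟩
  simpa using (sum_intCast_prod_eq_zero_iff (m := a) (n := b) _ _ T).mpr hsum
end

section
/- For any positive integers a, b, c such that b divides c, one has (gcd(a,c) + lcm(a,c)) - (gcd(a,b) + lcm(a,b)) ≥ c/b - 1. -/
theorem stmt3 (a b c : ℕ) (ha : 0 < a) (hb : 0 < b) (hc : 0 < c) (hbc : b ∣ c) :
    Nat.gcd a b + Nat.lcm a b + (c / b - 1) ≤ Nat.gcd a c + Nat.lcm a c := by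
  obtain ⟨k, hk⟩ := hbc
  subst hk
  have hk1 : 0 < k := Nat.pos_of_mul_pos_left (by rwa [Nat.mul_comm] at hc)
  rw [Nat.mul_div_cancel_left _ hb]
  set g := Nat.gcd a b with hg
  set l := Nat.lcm a b with hl
  set G := Nat.gcd a (b * k) with hG
  set L := Nat.lcm a (b * k) with hL
  have hg0 : 0 < g := Nat.gcd_pos_of_pos_right _ hb
  have hl0 : 0 < l := Nat.pos_of_ne_zero (by
    simp [hl, Nat.lcm_ne_zero, ha.ne', hb.ne'])
  have hgG : g ∣ G := Nat.gcd_dvd_gcd_of_dvd_right _ ⟨k, rfl⟩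
  have hlL : l ∣ L := Nat.lcm_dvd (Nat.dvd_lcm_left _ _)
    ((Dvd.intro k rfl).trans (Nat.dvd_lcm_right _ _))
  obtain ⟨s, hs⟩ := hgG
  obtain ⟨t, ht⟩ := hlL
  have hGL : G * L = a * (b * k) := Nat.gcd_mul_lcm _ _
  have hglab : g * l = a * b := Nat.gcd_mul_lcm _ _
  have hst : s * t = k := by
    have h : g * l * (s * t) = g * l * k := by
      calc g * l * (s * t) = (g * s) * (l * t) := by ring
        _ = G * L := by rw [hs, ht]
        _ = a * (b * k) := hGL
        _ = (a * b) * k := by ring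
        _ = g * l * k := by rw [hglab]
    exact Nat.eq_of_mul_eq_mul_left (by positivity) h
  have hs0 : 0 < s := by
    rcases Nat.eq_zero_or_pos s with h | h
    · simp [h] at hst; omega
    · exact h
  have ht0 : 0 < t := by
    rcases Nat.eq_zero_or_pos t with h | h
    · simp [h] at hst; omega
    · exact h
  have hsl : s ≤ l := by
    have h1 : s ≤ G := Nat.le_of_dvd (by rw [hs]; positivity) ⟨g, by rw [hs]; ring⟩
    have h2 : G ≤ a := Nat.le_of_dvd ha (Nat.gcd_dvd_left _ _)
    have h3 : a ≤ l := Nat.le_of_dvd hl0 (Nat.dvd_lcm_left _ _)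
    omega
  rw [hs, ht, ← hst]
  have key : g + l + s * t ≤ g * s + l * t + 1 := by
    zify
    have h1 : (1:ℤ) ≤ g := by exact_mod_cast hg0
    have h2 : (1:ℤ) ≤ s := by exact_mod_cast hs0
    have h3 : (1:ℤ) ≤ t := by exact_mod_cast ht0
    have h4 : (s:ℤ) ≤ l := by exact_mod_cast hsl
    nlinarith [mul_nonneg (by linarith : (0:ℤ) ≤ (g:ℤ) - 1) (by linarith : (0:ℤ) ≤ (s:ℤ) - 1),
      mul_nonneg (by linarith : (0:ℤ) ≤ (l:ℤ) - s) (by linarith : (0:ℤ) ≤ (t:ℤ) - 1)]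
  have hst1 : 1 ≤ s * t := Nat.mul_pos hs0 ht0
  omega
end

section
/- For every odd integer m > 1, the Erdős-Burgess constant of the multiplicative semigroup of ℤ/2mℤ equals the Erdős-Burgess constant of the multiplicative semigroup of ℤ/mℤ. -/
/-- The Davenport constant of a (multiplicative) commutative group: the least `k > 0` such
that every sequence of `k` elements has a nonempty subsequence with product `1`. -/
noncomputable def Davenport (G : Type*) [CommGroup G] : ℕ :=
  sInf {k : ℕ | 0 < k ∧ ∀ f : Fin k → G,
    ∃ T : Finset (Fin k), T.Nonempty ∧ ∏ i ∈ T, f i = 1}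

/-- The Erdős–Burgess constant of a commutative monoid: the least `t > 0` such that every
sequence of `t` elements has a nonempty subsequence whose product is idempotent. -/
noncomputable def ErdosBurgess (M : Type*) [CommMonoid M] : ℕ :=
  sInf {t : ℕ | 0 < t ∧ ∀ f : Fin t → M,
    ∃ T : Finset (Fin t), T.Nonempty ∧ (∏ i ∈ T, f i) * (∏ i ∈ T, f i) = ∏ i ∈ T, f i}

/-!
By the Chinese remainder theorem `ℤ/2mℤ ≅ ℤ/2ℤ × ℤ/mℤ`, and every element of `ℤ/2ℤ` is
idempotent. So a subproduct is idempotent in `ℤ/2mℤ` exactly when its image in `ℤ/mℤ` is, and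
the projection to `ℤ/mℤ` is surjective: sequences in the two rings admit idempotent subproducts
at exactly the same lengths.
-/

open Function

def HasIdempotentSubproduct (M : Type*) [CommMonoid M] (t : ℕ) : Prop :=
  ∀ f : Fin t → M, ∃ T : Finset (Fin t), T.Nonempty ∧ IsIdempotentElem (∏ i ∈ T, f i)

lemma ErdosBurgess_eq_sInf (M : Type*) [CommMonoid M] :
    ErdosBurgess M = sInf {t | 0 < t ∧ HasIdempotentSubproduct M t} :=
  rfl

section

variable {M N : Type*} [CommMonoid M] [CommMonoid N] {t : ℕ}

lemma HasIdempotentSubproduct.of_surjective (h : HasIdempotentSubproduct M t) (φ : M →* N)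
    (hφ : Surjective φ) : HasIdempotentSubproduct N t := by
  intro g
  obtain ⟨T, hT, hidem⟩ := h fun i => surjInv hφ (g i)
  refine ⟨T, hT, ?_⟩
  simpa only [map_prod, surjInv_eq hφ] using hidem.map φ

lemma HasIdempotentSubproduct.comap (h : HasIdempotentSubproduct N t) (φ : M →* N)
    (hφ : ∀ x, IsIdempotentElem (φ x) → IsIdempotentElem x) : HasIdempotentSubproduct M t := by
  intro f
  obtain ⟨T, hT, hidem⟩ := h fun i => φ (f i)
  rw [← map_prod] at hidem
  exact ⟨T, hT, hφ _ hidem⟩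

lemma ErdosBurgess_eq_of_surjective (φ : M →* N) (hφ : Surjective φ)
    (hrefl : ∀ x, IsIdempotentElem (φ x) → IsIdempotentElem x) :
    ErdosBurgess M = ErdosBurgess N := by
  simp only [ErdosBurgess_eq_sInf]
  congr! 3 with t
  exact and_congr_right fun _ => ⟨(·.of_surjective φ hφ), (·.comap φ hrefl)⟩

lemma ErdosBurgess_congr (e : M ≃* N) : ErdosBurgess M = ErdosBurgess N :=
  ErdosBurgess_eq_of_surjective e.toMonoidHom e.surjective fun x hx => by
    simpa using hx.map e.symm

lemma ErdosBurgess_prod_of_forall_isIdempotentElem (hN : ∀ a : N, IsIdempotentElem a) :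
    ErdosBurgess (N × M) = ErdosBurgess M :=
  ErdosBurgess_eq_of_surjective (MonoidHom.snd N M) Prod.snd_surjective fun p hp =>
    Prod.ext (hN p.1) hp

end

theorem stmt5_general (m : ℕ) (hodd : Odd m) :
    ErdosBurgess (ZMod (2 * m)) = ErdosBurgess (ZMod m) := by
  have e : ZMod (2 * m) ≃* ZMod 2 × ZMod m :=
    (ZMod.chineseRemainder (Nat.coprime_two_left.mpr hodd)).toMulEquiv
  rw [ErdosBurgess_congr e, ErdosBurgess_prod_of_forall_isIdempotentElem
    (by decide : ∀ a : ZMod 2, a * a = a)]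

theorem stmt5 (m : ℕ) (hm : 1 < m) (hodd : Odd m) :
    ErdosBurgess (ZMod (2 * m)) = ErdosBurgess (ZMod m) :=
  stmt5_general m hodd
end

section
/- For every integer n > 1, I_r(ℤ/nℤ) ≥ D((ℤ/nℤ)^×) + Ω(n) - ω(n), where Ω(n) is the number of prime factors of n counted with multiplicity and ω(n) is the number of distinct prime factors of n. -/
/-!
Append to a product-one free sequence of `D((ℤ/nℤ)ˣ) - 1` units the prime factors of `n / rad n`,
i.e. each prime `p ∣ n` repeated `v_p(n) - 1` times. A nonempty subproduct is `w * m` with `w` a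
unit and `m ∣ n / rad n`. If `m = 1` it is a unit other than `1`, so not idempotent. Otherwise a
prime `p` divides `m`, so the subproduct is nilpotent modulo `p ^ v_p(n)`; being idempotent it
would vanish there, giving `p ^ v_p(n) ∣ m ∣ n / rad n`, which is impossible.
-/

open Finset

section IdempotentPowers

variable {M : Type*} [Monoid M]

theorem pow_add_mul_eq_of_pow_add_eq {x : M} {a b m : ℕ} (h : x ^ (a + b) = x ^ a)
    (ham : a ≤ m) (k : ℕ) : x ^ (m + k * b) = x ^ m := by
  obtain ⟨c, rfl⟩ := Nat.exists_eq_add_of_le ham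
  induction k with
  | zero => simp
  | succ k ih =>
    calc x ^ (a + c + (k + 1) * b) = x ^ (a + b) * x ^ (c + k * b) := by
          rw [← pow_add]; ring_nf
      _ = x ^ (a + c) := by rw [h, ← pow_add, ← ih]; ring_nf

theorem exists_isIdempotentElem_pow [Finite M] (x : M) :
    ∃ n, 0 < n ∧ IsIdempotentElem (x ^ n) := by
  obtain ⟨i, j, hij, h⟩ := Finite.exists_ne_map_eq_of_infinite (fun k : ℕ => x ^ k)
  wlog hlt : i < j generalizing i j
  · exact this j i hij.symm h.symm (by omega)
  obtain ⟨b, rfl⟩ := Nat.exists_eq_add_of_lt hlt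
  refine ⟨(i + 1) * (b + 1), by positivity, ?_⟩
  rw [IsIdempotentElem, ← pow_add]
  have hper : x ^ (i + (b + 1)) = x ^ i := h.symm
  exact pow_add_mul_eq_of_pow_add_eq hper (by nlinarith) (i + 1)

end IdempotentPowers

section ErdosBurgess

variable {M : Type*} [CommMonoid M]

theorem exists_forall_exists_isIdempotentElem_prod [Finite M] :
    ∃ t, 0 < t ∧ ∀ f : Fin t → M,
      ∃ T : Finset (Fin t), T.Nonempty ∧ IsIdempotentElem (∏ i ∈ T, f i) := by
  classical
  have := Fintype.ofFinite M
  choose e he using exists_isIdempotentElem_pow (M := M)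
  set N := univ.sup e
  refine ⟨Fintype.card M * N + 1, by omega, fun f => ?_⟩
  obtain ⟨x, hx⟩ := Fintype.exists_lt_card_fiber_of_mul_lt_card (n := N) f (by simp)
  have hex : e x ≤ #{i | f i = x} := (le_sup (mem_univ x)).trans hx.le
  obtain ⟨T, hT, hTcard⟩ := exists_subset_card_eq hex
  refine ⟨T, card_pos.mp (hTcard ▸ (he x).1), ?_⟩
  rw [prod_congr rfl fun i hi => (mem_filter.mp (hT hi)).2, prod_const, hTcard]
  exact (he x).2

theorem card_lt_erdosBurgess [Finite M] {ι : Type*} [Fintype ι] (f : ι → M)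
    (hf : ∀ T : Finset ι, T.Nonempty → ¬ IsIdempotentElem (∏ i ∈ T, f i)) :
    Fintype.card ι < ErdosBurgess M := by
  obtain ⟨t, ht⟩ := exists_forall_exists_isIdempotentElem_prod (M := M)
  refine Nat.lt_of_succ_le (le_csInf ⟨t, ht⟩ fun t ht => ?_)
  by_contra! hlt
  obtain ⟨g⟩ : Nonempty (Fin t ↪ ι) :=
    Function.Embedding.nonempty_of_card_le (by simpa using Nat.le_of_lt_succ hlt)
  obtain ⟨T, hT, hidem⟩ := ht.2 (f ∘ g)
  exact hf (T.map g) hT.map (by rwa [prod_map])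

theorem not_isIdempotentElem_prod_sumElim {α β : Type*} (u : α → Mˣ)
    (hu : ∀ T : Finset α, T.Nonempty → ∏ i ∈ T, u i ≠ 1) (v : β → M)
    (hv : ∀ (w : Mˣ) (S : Finset β), S.Nonempty → ¬ IsIdempotentElem (w * ∏ i ∈ S, v i))
    (T : Finset (α ⊕ β)) (hT : T.Nonempty) :
    ¬ IsIdempotentElem (∏ i ∈ T, Sum.elim (fun a => (u a : M)) v i) := by
  obtain ⟨s, t, rfl⟩ : ∃ (s : Finset α) (t : Finset β), T = s.disjSum t :=
    ⟨_, _, T.toLeft_disjSum_toRight.symm⟩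
  rw [prod_disjSum]
  simp only [Sum.elim_inl, Sum.elim_inr]
  rw [← Units.coe_prod]
  rcases t.eq_empty_or_nonempty with rfl | ht
  · rw [disjSum_empty, map_nonempty] at hT
    rw [prod_empty, mul_one, IsIdempotentElem.iff_eq_one_of_isUnit (Units.isUnit _),
      Units.val_eq_one]
    exact hu s hT
  · exact hv _ t ht

end ErdosBurgess

theorem exists_prod_ne_one_of_davenport_sub_one (G : Type*) [CommGroup G] :
    ∃ u : Fin (Davenport G - 1) → G,
      ∀ T : Finset (Fin (Davenport G - 1)), T.Nonempty → ∏ i ∈ T, u i ≠ 1 := by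
  rcases Nat.lt_or_ge (Davenport G) 2 with hD | hD
  · exact ⟨fun _ => 1, fun T ⟨i, _⟩ => absurd i.2 (by omega)⟩
  · have hmem := Nat.notMem_of_lt_sInf (m := Davenport G - 1) (Nat.sub_lt (by omega) one_pos)
    simp only [Set.mem_ofPred_eq, not_and, not_forall, not_exists] at hmem
    exact hmem (by omega)

namespace ZMod

theorem pow_factorization_dvd_of_isIdempotentElem_unit_mul {n m p : ℕ}
    (hpm : p ∣ m) (w : (ZMod n)ˣ) (h : IsIdempotentElem ((w : ZMod n) * m)) :
    p ^ n.factorization p ∣ m := by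
  set q := p ^ n.factorization p
  let φ := castHom (Nat.ordProj_dvd n p) (ZMod q)
  have hnil : IsNilpotent (m : ZMod q) :=
    ⟨n.factorization p, by
      rw [← Nat.cast_pow, natCast_eq_zero_iff]; exact pow_dvd_pow_of_dvd hpm _⟩
  have hidem : IsIdempotentElem ((Units.map φ.toMonoidHom w : ZMod q) * m) := by
    have := h.map φ
    rwa [map_mul, map_natCast] at this
  have hzero := hidem.eq_zero_of_isNilpotent ((Commute.all _ _).isNilpotent_mul_left hnil)
  rwa [Units.mul_right_eq_zero, natCast_eq_zero_iff] at hzero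

theorem not_isIdempotentElem_unit_mul {n m : ℕ} (hn : n ≠ 0)
    (hm : m * ∏ p ∈ n.primeFactors, p ∣ n) (hm1 : m ≠ 1) (w : (ZMod n)ˣ) :
    ¬ IsIdempotentElem ((w : ZMod n) * m) := by
  intro h
  set p := m.minFac
  have hp : p.Prime := Nat.minFac_prime hm1
  have hpn : p ∈ n.primeFactors :=
    Nat.mem_primeFactors.mpr ⟨hp, m.minFac_dvd.trans (dvd_of_mul_right_dvd hm), hn⟩
  apply Nat.pow_succ_factorization_not_dvd hn hp
  calc p ^ (n.factorization p + 1) = p ^ n.factorization p * p := pow_succ _ _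
    _ ∣ m * ∏ p ∈ n.primeFactors, p :=
      mul_dvd_mul (pow_factorization_dvd_of_isIdempotentElem_unit_mul m.minFac_dvd w h)
        (dvd_prod_of_mem _ hpn)
    _ ∣ n := hm

theorem not_isIdempotentElem_unit_mul_prod {n : ℕ} (hn : n ≠ 0) {ι : Type*} [Fintype ι]
    (q : ι → ℕ) (hq : ∀ i, (q i).Prime) (hdvd : (∏ i, q i) * ∏ p ∈ n.primeFactors, p ∣ n)
    (w : (ZMod n)ˣ) (S : Finset ι) (hS : S.Nonempty) :
    ¬ IsIdempotentElem ((w : ZMod n) * ∏ i ∈ S, (q i : ZMod n)) := by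
  obtain ⟨i, hi⟩ := hS
  rw [← Nat.cast_prod]
  refine not_isIdempotentElem_unit_mul hn
    ((mul_dvd_mul_right (prod_dvd_prod_of_subset _ _ _ (subset_univ S)) _).trans hdvd) ?_ w
  exact fun h1 => (hq i).not_dvd_one (h1 ▸ dvd_prod_of_mem q hi)

end ZMod

namespace Nat

def repeatedPrimeFactors (n : ℕ) : Multiset ℕ :=
  n.primeFactorsList - n.primeFactors.val

theorem primeFactors_val_le (n : ℕ) : n.primeFactors.val ≤ n.primeFactorsList := by
  rw [Nat.primeFactors, List.toFinset_val]
  exact Multiset.dedup_le _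

theorem card_repeatedPrimeFactors (n : ℕ) :
    Multiset.card n.repeatedPrimeFactors = n.primeFactorsList.length - n.primeFactors.card := by
  rw [repeatedPrimeFactors, Multiset.card_sub (primeFactors_val_le n)]
  rfl

theorem prod_repeatedPrimeFactors_mul {n : ℕ} (hn : n ≠ 0) :
    n.repeatedPrimeFactors.prod * ∏ p ∈ n.primeFactors, p = n := by
  rw [prod_eq_multiset_prod, Multiset.map_id', ← Multiset.prod_add, repeatedPrimeFactors,
    tsub_add_cancel_of_le (primeFactors_val_le n), Multiset.prod_coe, prod_primeFactorsList hn]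

theorem prime_of_mem_repeatedPrimeFactors {n p : ℕ} (h : p ∈ n.repeatedPrimeFactors) :
    p.Prime :=
  prime_of_mem_primeFactorsList (Multiset.mem_of_le tsub_le_self h)

end Nat

theorem stmt9 (n : ℕ) (hn : 1 < n) :
    Davenport ((ZMod n)ˣ) + n.primeFactorsList.length - n.primeFactors.card ≤
      ErdosBurgess (ZMod n) := by
  have hn0 : n ≠ 0 := by omega
  have : NeZero n := ⟨hn0⟩
  obtain ⟨u, hu⟩ := exists_prod_ne_one_of_davenport_sub_one (ZMod n)ˣ
  set l := n.repeatedPrimeFactors.toList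
  have hl : (∏ i : Fin l.length, l[(i : ℕ)]) * ∏ p ∈ n.primeFactors, p ∣ n := by
    rw [Fin.prod_univ_getElem, Multiset.prod_toList, Nat.prod_repeatedPrimeFactors_mul hn0]
  have hprime : ∀ i : Fin l.length, l[(i : ℕ)].Prime := fun i =>
    Nat.prime_of_mem_repeatedPrimeFactors (Multiset.mem_toList.mp (l.getElem_mem _))
  have hcard := card_lt_erdosBurgess _ <| not_isIdempotentElem_prod_sumElim u hu _ <|
    ZMod.not_isIdempotentElem_unit_mul_prod hn0 _ hprime hl
  rw [Fintype.card_sum, Fintype.card_fin, Fintype.card_fin, Multiset.length_toList,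
    Nat.card_repeatedPrimeFactors] at hcard
  omega
end

section
/- Let n = p_1⋯p_r·m where the p_i are distinct primes not dividing m. Suppose every sequence of length t over the set of elements of ℤ/nℤ coprime to each p_i contains a nonempty subsequence whose product is idempotent. Then every sequence of length t over ℤ/nℤ contains a nonempty subsequence whose product is idempotent. -/
/-!
Write `n = q * m` with `q = p₁ ⋯ pᵣ`, so that by the Chinese remainder theorem
`ZMod n ≃ (Π i, ZMod pᵢ) × ZMod m`. Replacing every component `0` of a term modulo some `pᵢ`
by `1` produces a sequence over the elements coprime to all `pᵢ`. A subproduct of the new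
sequence that is idempotent stays idempotent when the original terms are put back: modulo `m`
nothing changed, and modulo `pᵢ` the product is either unchanged or `0`.
-/

theorem isIdempotentElem_prod_of_forall_ne_zero_eq {ι M : Type*} [CommMonoidWithZero M]
    {s : Finset ι} {a b : ι → M} (hab : ∀ j ∈ s, a j ≠ 0 → a j = b j)
    (hb : IsIdempotentElem (∏ j ∈ s, b j)) : IsIdempotentElem (∏ j ∈ s, a j) := by
  by_cases hzero : ∃ j ∈ s, a j = 0
  · obtain ⟨j, hj, haj⟩ := hzero
    rw [Finset.prod_eq_zero hj haj]
    exact IsIdempotentElem.zero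
  · push Not at hzero
    rwa [Finset.prod_congr rfl fun j hj => hab j hj (hzero j hj)]

section ProdPi

variable {ι R S : Type*} {K : ι → Type*} [CommRing R] [CommRing S] [∀ i, CommRing (K i)]

theorem RingEquiv.isIdempotentElem_iff_of_prodPi (e : R ≃+* (Π i, K i) × S) {x : R} :
    IsIdempotentElem x ↔ (∀ i, IsIdempotentElem ((e x).1 i)) ∧ IsIdempotentElem (e x).2 := by
  simp only [IsIdempotentElem, ← e.injective.eq_iff, map_mul, Prod.ext_iff, funext_iff,
    Prod.fst_mul, Prod.snd_mul, Pi.mul_apply]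

theorem exists_isIdempotentElem_prod_of_forall_ne_zero {J : Type*} [∀ i, Nontrivial (K i)]
    (e : R ≃+* (Π i, K i) × S)
    (H : ∀ g : J → R, (∀ j i, (e (g j)).1 i ≠ 0) →
      ∃ T : Finset J, T.Nonempty ∧ IsIdempotentElem (∏ j ∈ T, g j))
    (f : J → R) : ∃ T : Finset J, T.Nonempty ∧ IsIdempotentElem (∏ j ∈ T, f j) := by
  classical
  let g : J → R := fun j =>
    e.symm (fun i => if (e (f j)).1 i = 0 then 1 else (e (f j)).1 i, (e (f j)).2)
  have hge : ∀ j, e (g j) =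
      (fun i => if (e (f j)).1 i = 0 then 1 else (e (f j)).1 i, (e (f j)).2) :=
    fun j => e.apply_symm_apply _
  obtain ⟨T, hT, hidem⟩ := H g fun j i => by
    rw [hge]
    dsimp only
    split_ifs with h
    exacts [one_ne_zero, h]
  refine ⟨T, hT, ?_⟩
  rw [e.isIdempotentElem_iff_of_prodPi, map_prod] at hidem ⊢
  simp only [Prod.fst_prod, Prod.snd_prod, Finset.prod_apply, hge] at hidem ⊢
  exact ⟨fun i => isIdempotentElem_prod_of_forall_ne_zero_eq (fun j _ hj => (if_neg hj).symm)
    (hidem.1 i), hidem.2⟩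

end ProdPi

theorem ZMod.coprime_val_of_map_ne_zero {n p : ℕ} [NeZero n] (hp : p.Prime)
    (φ : ZMod n →+* ZMod p) {y : ZMod n} (hy : φ y ≠ 0) : Nat.Coprime y.val p := by
  rw [← ZMod.natCast_zmod_val y, map_natCast, ne_eq, ZMod.natCast_eq_zero_iff] at hy
  exact Nat.coprime_comm.mp (hp.coprime_iff_not_dvd.mpr hy)

theorem stmt10 (r m t : ℕ) (hm : 0 < m) (p : Fin r → ℕ) (hp : ∀ i, (p i).Prime)
    (hinj : Function.Injective p) (hpm : ∀ i, ¬ p i ∣ m) (n : ℕ)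
    (hn : n = (∏ i, p i) * m)
    (H : ∀ f : Fin t → ZMod n, (∀ j, ∀ i, Nat.Coprime ((f j).val) (p i)) →
      ∃ T : Finset (Fin t), T.Nonempty ∧
        (∏ i ∈ T, f i) * (∏ i ∈ T, f i) = ∏ i ∈ T, f i) :
    ∀ f : Fin t → ZMod n, ∃ T : Finset (Fin t), T.Nonempty ∧
      (∏ i ∈ T, f i) * (∏ i ∈ T, f i) = ∏ i ∈ T, f i := by
  subst hn
  have : NeZero ((∏ i, p i) * m) :=
    ⟨Nat.mul_ne_zero (Finset.prod_ne_zero_iff.mpr fun i _ => (hp i).ne_zero) hm.ne'⟩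
  have : ∀ i, Fact (1 < p i) := fun i => ⟨(hp i).one_lt⟩
  have hpair : Pairwise fun i j => Nat.Coprime (p i) (p j) := fun i j hij =>
    (Nat.coprime_primes (hp i) (hp j)).mpr (hinj.ne hij)
  have hcop : Nat.Coprime (∏ i, p i) m :=
    Nat.Coprime.prod_left fun i _ => (hp i).coprime_iff_not_dvd.mpr (hpm i)
  let e := (ZMod.chineseRemainder hcop).trans
    ((ZMod.prodEquivPi p hpair).prodCongr (RingEquiv.refl (ZMod m)))
  refine exists_isIdempotentElem_prod_of_forall_ne_zero e fun g hg => H g fun j i => ?_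
  exact ZMod.coprime_val_of_map_ne_zero (hp i)
    ((Pi.evalRingHom _ i).comp ((RingHom.fst _ _).comp e.toRingHom)) (hg j i)
end

section
/- Let R be a UFD, p ∈ R a prime element, and k ≥ 1 such that R/(p^k) is finite. Then I_r(R/(p^k)) = D((R/(p^k))^×) + (k - 1). -/
/-!
Write `π` for the image of `p` in `M = R/(p^k)`. Every nonunit of `M` is a multiple of `π`
(a non-multiple of `p` is a non-zero-divisor, hence a unit, in the finite ring `M`), and
`π` is nilpotent of order exactly `k`. So among `D(Mˣ) + k - 1` elements there are either
`k` nonunits, whose product is `0`, or `D(Mˣ)` units, some of which multiply to `1`.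
Conversely, a product-one free sequence of `D(Mˣ) - 1` units followed by `k - 1` copies
of `π` has no idempotent subproduct: such a subproduct is `u π^j` with `u` a unit and
`0 ≤ j < k`; for `j = 0` it would be `1`, and for `j > 0` it would be a nonzero element
equal to its own `k`-th power, which is divisible by `π^k = 0`.
-/

open Finset

def HasProdOneSubseq {ι G : Type*} [CommMonoid G] (f : ι → G) : Prop :=
  ∃ T : Finset ι, T.Nonempty ∧ ∏ i ∈ T, f i = 1

def HasIdempotentProdSubseq {ι M : Type*} [CommMonoid M] (f : ι → M) : Prop :=
  ∃ T : Finset ι, T.Nonempty ∧ IsIdempotentElem (∏ i ∈ T, f i)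

section Davenport

variable {G : Type*} [CommGroup G]

theorem hasProdOneSubseq_of_card_mul_card_le [Finite G] {n : ℕ}
    (hn : Nat.card G * Nat.card G ≤ n) (f : Fin n → G) : HasProdOneSubseq f := by
  classical
  have := Fintype.ofFinite G
  rw [Nat.card_eq_fintype_card] at hn
  obtain ⟨y, -, hy⟩ := exists_le_card_fiber_of_mul_le_card_of_maps_to (s := univ) (t := univ)
    (f := f) (n := Fintype.card G) (fun _ _ => mem_univ _) univ_nonempty (by simpa using hn)
  obtain ⟨T, hTy, hT⟩ := exists_subset_card_eq (orderOf_le_card_univ.trans hy)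
  refine ⟨T, card_pos.mp (hT ▸ orderOf_pos y), ?_⟩
  rw [prod_congr rfl fun i hi => (mem_filter.mp (hTy hi)).2, prod_const, hT, pow_orderOf_eq_one]

theorem davenport_spec [Finite G] :
    0 < Davenport G ∧ ∀ f : Fin (Davenport G) → G, HasProdOneSubseq f :=
  Nat.sInf_mem (s := {k | 0 < k ∧ ∀ f : Fin k → G, HasProdOneSubseq f})
    ⟨_, Nat.mul_pos Nat.card_pos Nat.card_pos, hasProdOneSubseq_of_card_mul_card_le le_rfl⟩

theorem exists_prod_eq_one_of_davenport_le_card [Finite G] {ι : Type*} (f : ι → G) {s : Finset ι} (hs : Davenport G ≤ #s) :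
    ∃ T ⊆ s, T.Nonempty ∧ ∏ i ∈ T, f i = 1 := by
  obtain ⟨A, hAs, hA⟩ := exists_subset_card_eq hs
  let e : Fin (Davenport G) ↪ ι :=
    ((finCongr hA.symm).trans A.equivFin.symm).toEmbedding.trans (Function.Embedding.subtype _)
  obtain ⟨T, hT, h1⟩ := davenport_spec.2 (f ∘ e)
  refine ⟨T.map e, fun i hi => ?_, hT.map, by rwa [prod_map]⟩
  obtain ⟨j, -, rfl⟩ := mem_map.mp hi
  exact hAs (Subtype.prop _)

theorem exists_not_hasProdOneSubseq_of_lt_davenport {n : ℕ} (hn : n < Davenport G) :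
    ∃ f : Fin n → G, ¬HasProdOneSubseq f := by
  rcases n.eq_zero_or_pos with rfl | hn0
  · exact ⟨finZeroElim, fun ⟨T, hT, _⟩ => hT.ne_empty (eq_empty_of_isEmpty T)⟩
  · exact not_forall.mp (not_and.mp (Nat.notMem_of_lt_sInf hn) hn0)

end Davenport

theorem erdosBurgess_eq_of_not_hasIdempotentProdSubseq {M : Type*} [CommMonoid M] {n : ℕ}
    (hn : 0 < n) (hgood : ∀ f : Fin n → M, HasIdempotentProdSubseq f) {ι : Type*} [Fintype ι]
    (hι : Fintype.card ι + 1 = n) {f : ι → M} (hf : ¬HasIdempotentProdSubseq f) :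
    ErdosBurgess M = n := by
  refine le_antisymm (Nat.sInf_le ⟨hn, hgood⟩) (le_csInf ⟨n, hn, hgood⟩ fun t ⟨_, ht⟩ => ?_)
  by_contra! htn
  let e : Fin t ↪ ι := (Fin.castLEEmb (by omega)).trans (Fintype.equivFin ι).symm.toEmbedding
  obtain ⟨T, hT, hidem⟩ := ht (f ∘ e)
  exact hf ⟨T.map e, hT.map, by rwa [prod_map]⟩

section NilpotentUniformizer

variable {M : Type*} [CommMonoidWithZero M] {π : M} {k : ℕ}

theorem hasIdempotentProdSubseq_of_davenport_units_add_le [Finite M] (hk : 0 < k)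
    (hπk : π ^ k = 0) (hdvd : ∀ x : M, ¬IsUnit x → π ∣ x) {ι : Type*} [Fintype ι]
    (hι : Davenport Mˣ + (k - 1) ≤ Fintype.card ι) (f : ι → M) :
    HasIdempotentProdSubseq f := by
  classical
  by_cases hnonunits : k ≤ #{i | ¬IsUnit (f i)}
  · obtain ⟨T, hTs, hT⟩ := exists_subset_card_eq hnonunits
    have hπT : π ^ k ∣ ∏ i ∈ T, f i := by
      simpa [hT] using prod_dvd_prod_of_dvd (fun _ => π) f
        fun i hi => hdvd (f i) (mem_filter.mp (hTs hi)).2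
    refine ⟨T, card_pos.mp (hT ▸ hk), ?_⟩
    rw [hπk, zero_dvd_iff] at hπT
    exact hπT ▸ IsIdempotentElem.zero
  · have hunits : Davenport Mˣ ≤ #{i | IsUnit (f i)} := by
      have := card_filter_add_card_filter_not (s := univ) fun i => IsUnit (f i)
      rw [card_univ] at this
      omega
    let g : ι → Mˣ := fun i => if h : IsUnit (f i) then h.unit else 1
    obtain ⟨T, hTs, hT, h1⟩ := exists_prod_eq_one_of_davenport_le_card g hunits
    have hfT : ∏ i ∈ T, f i = 1 := by
      rw [← Units.val_one, ← h1, Units.coe_prod]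
      refine prod_congr rfl fun i hi => ?_
      simp [g, dif_pos (mem_filter.mp (hTs hi)).2]
    exact ⟨T, hT, hfT ▸ IsIdempotentElem.one⟩

theorem not_hasIdempotentProdSubseq_sumElim (hk : 0 < k) (hπk : π ^ k = 0)
    (hπ : π ^ (k - 1) ≠ 0) {ι : Type*} {g : ι → Mˣ} (hg : ¬HasProdOneSubseq g) :
    ¬HasIdempotentProdSubseq (Sum.elim (fun i => (g i : M)) fun _ : Fin (k - 1) => π) := by
  rintro ⟨T, hT, hidem⟩
  rw [prod_sum_eq_prod_toLeft_mul_prod_toRight] at hidem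
  simp only [Sum.elim_inl, Sum.elim_inr, prod_const, ← Units.coe_prod] at hidem
  set u := ∏ i ∈ T.toLeft, g i
  set j := #T.toRight
  rcases Nat.eq_zero_or_pos j with hj | hj
  · rw [hj, pow_zero, mul_one, IsIdempotentElem.iff_eq_one_of_isUnit u.isUnit,
      Units.val_eq_one] at hidem
    refine hg ⟨T.toLeft, ?_, hidem⟩
    obtain ⟨x | x, hx⟩ := hT
    · exact ⟨x, mem_toLeft.mpr hx⟩
    · exact absurd hj (card_pos.mpr ⟨x, mem_toRight.mpr hx⟩).ne'
  · have hjk : j ≤ k - 1 := (card_le_univ _).trans_eq (Fintype.card_fin _)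
    have hne : (u : M) * π ^ j ≠ 0 := fun h =>
      hπ (pow_eq_zero_of_le hjk ((Units.mul_right_eq_zero u).mp h))
    refine hne ?_
    calc (u : M) * π ^ j = ((u : M) * π ^ j) ^ k := (hidem.pow_eq hk.ne').symm
      _ = (u : M) ^ k * (π ^ k) ^ j := by rw [mul_pow, ← pow_mul, mul_comm j, pow_mul]
      _ = 0 := by rw [hπk, zero_pow hj.ne', mul_zero]

theorem erdosBurgess_eq_davenport_units_add [Finite M] (hk : 0 < k) (hπk : π ^ k = 0)
    (hπ : π ^ (k - 1) ≠ 0) (hdvd : ∀ x : M, ¬IsUnit x → π ∣ x) :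
    ErdosBurgess M = Davenport Mˣ + (k - 1) := by
  have hD : 0 < Davenport Mˣ := davenport_spec.1
  obtain ⟨g, hg⟩ := exists_not_hasProdOneSubseq_of_lt_davenport (Nat.sub_lt hD one_pos)
  refine erdosBurgess_eq_of_not_hasIdempotentProdSubseq (by omega)
    (hasIdempotentProdSubseq_of_davenport_units_add_le hk hπk hdvd (by simp)) ?_
    (not_hasIdempotentProdSubseq_sumElim hk hπk hπ hg)
  simp only [Fintype.card_sum, Fintype.card_fin]
  omega

end NilpotentUniformizer

section QuotientPrimePow

variable {R : Type*} [CommRing R] {p : R} {k : ℕ}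

theorem mk_span_pow_pow_eq_zero :
    Ideal.Quotient.mk (Ideal.span {p ^ k}) p ^ k = 0 := by
  rw [← map_pow, Ideal.Quotient.eq_zero_iff_mem]
  exact Ideal.mem_span_singleton_self _

variable [IsDomain R]

theorem mk_span_pow_pow_ne_zero (hp : Prime p) {j : ℕ} (hj : j < k) :
    Ideal.Quotient.mk (Ideal.span {p ^ k}) p ^ j ≠ 0 := by
  rw [← map_pow, Ne, Ideal.Quotient.eq_zero_iff_mem, Ideal.mem_span_singleton,
    pow_dvd_pow_iff hp.ne_zero hp.not_isUnit]
  omega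

theorem mk_span_pow_dvd_of_not_isUnit (hp : Prime p) [Finite (R ⧸ Ideal.span {p ^ k})]
    {x : R ⧸ Ideal.span {p ^ k}} (hx : ¬IsUnit x) : Ideal.Quotient.mk _ p ∣ x := by
  obtain ⟨r, rfl⟩ := Ideal.Quotient.mk_surjective x
  by_contra hpr
  replace hpr : ¬p ∣ r := fun h => hpr (map_dvd _ h)
  refine hx (isUnit_iff_mem_nonZeroDivisors_of_finite.mpr
    (mem_nonZeroDivisors_iff_left.mpr fun z hz => ?_))
  obtain ⟨s, rfl⟩ := Ideal.Quotient.mk_surjective z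
  rw [← map_mul] at hz
  rw [Ideal.Quotient.eq_zero_iff_mem, Ideal.mem_span_singleton] at hz ⊢
  exact hp.pow_dvd_of_dvd_mul_left k hpr hz

end QuotientPrimePow

theorem stmt17_general {R : Type*} [CommRing R] [IsDomain R]
    (p : R) (hp : Prime p) (k : ℕ) (hk : 0 < k)
    [Finite (R ⧸ Ideal.span {p ^ k})] :
    ErdosBurgess (R ⧸ Ideal.span {p ^ k}) =
      Davenport ((R ⧸ Ideal.span {p ^ k})ˣ) + (k - 1) :=
  erdosBurgess_eq_davenport_units_add hk mk_span_pow_pow_eq_zero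
    (mk_span_pow_pow_ne_zero hp (Nat.sub_lt hk one_pos)) fun _ => mk_span_pow_dvd_of_not_isUnit hp

theorem stmt17 {R : Type*} [CommRing R] [IsDomain R] [UniqueFactorizationMonoid R]
    (p : R) (hp : Prime p) (k : ℕ) (hk : 0 < k)
    [Finite (R ⧸ Ideal.span {p ^ k})] :
    ErdosBurgess (R ⧸ Ideal.span {p ^ k}) =
      Davenport ((R ⧸ Ideal.span {p ^ k})ˣ) + (k - 1) :=
  stmt17_general p hp k hk
end
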